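/- Let (Q,*) be a quasigroup and N ≥ 1. For A = (a_0, …, a_{N-1}) ∈ Q^N define the intermediate strings C^(0)(A) = A and C^(m)(A) = e_{a_{m-1}}(C^(m-1)(A)) for 1 ≤ m ≤ N, so that C^(N)(A) = R_1(A). If A, A' ∈ Q^N satisfy R_1(A) = R_1(A'), then for every j with 0 ≤ j ≤ N and every index i with j ≤ i ≤ N-1, the i-th coordinate of C^(N-j)(A) equals the i-th coordinate of C^(N-j)(A'); that is, the value R_1(A) alone determines the lower-right triangular part of the table of intermediate strings arising in the computation of R_1. -/

import Mathlib

/-- The quasigroup `e`-transformation of a string `A ∈ Q^N` with leader `l`: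
`b 0 = l * a 0` and `b i = b (i-1) * a i`, i.e. `b i` is the left fold of
`mul` over `a 0, …, a i` starting from `l`. -/
def eTr {Q : Type*} (mul : Q → Q → Q) (l : Q) {N : ℕ} (A : Fin N → Q)
    (i : Fin N) : Q :=
  ((List.ofFn A).take ((i : ℕ) + 1)).foldl mul l

/-- The `E`-transformation determined by a list of leaders: apply the
`e`-transformations with the successive leaders, first leader first. -/
def eTrL {Q : Type*} (mul : Q → Q → Q) {N : ℕ} (L : List Q)
    (A : Fin N → Q) : Fin N → Q :=
  L.foldl (fun B l => eTr mul l B) A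

/-- The intermediate strings of the single reverse transformation `R_1`:
`C^(0)(A) = A` and `C^(m)(A) = e_{a_{m-1}} (C^(m-1)(A))` for `1 ≤ m ≤ N`,
so that `C^(N)(A) = R_1(A) = e_{a_{N-1}}(⋯(e_{a_1}(e_{a_0}(A)))⋯)`. -/
def rC {Q : Type*} {N : ℕ} (mul : Q → Q → Q) (A : Fin N → Q) (m : ℕ) :
    Fin N → Q :=
  eTrL mul ((List.ofFn A).take m) A

lemma rC_succ' {Q : Type*} (mul : Q → Q → Q) {N : ℕ} (A : Fin N → Q)
    (m : ℕ) (hm : m < N) :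
    rC mul A (m+1) = eTr mul (A ⟨m, hm⟩) (rC mul A m) := by
  unfold rC eTrL
  have hlen : m < (List.ofFn A).length := by simpa using hm
  rw [← List.take_concat_get hlen, List.concat_eq_append, List.foldl_append]
  simp

lemma eTr_succ' {Q : Type*} (mul : Q → Q → Q) (l : Q) {N : ℕ} (B : Fin N → Q)
    (i : Fin N) (k : ℕ) (hkN : k < N) (hk : (i : ℕ) = k + 1) :
    eTr mul l B i = mul (eTr mul l B ⟨k, hkN⟩) (B i) := by
  unfold eTr
  have hlen : k + 1 < (List.ofFn B).length := by simp; omega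
  rw [hk, ← List.take_concat_get hlen, List.concat_eq_append, List.foldl_append]
  simp only [List.foldl_cons, List.foldl_nil, List.getElem_ofFn]
  congr 1
  exact congrArg B (Fin.ext hk.symm)

/-- For a quasigroup `(Q, *)` and `N ≥ 1`, if `A, A' ∈ Q^N`
satisfy `R_1(A) = R_1(A')` (i.e. `C^(N)(A) = C^(N)(A')`), then for every
`0 ≤ j ≤ N` and every index `j ≤ i ≤ N - 1`, the `i`-th coordinate of
`C^(N-j)(A)` equals the `i`-th coordinate of `C^(N-j)(A')`: the value `R_1(A)`
alone determines the lower-right triangular part of the table of intermediate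
strings arising in the computation of `R_1`. -/
theorem R1_determines_triangle {Q : Type*} (mul : Q → Q → Q)
    (hleft : ∀ u v : Q, ∃! x, mul u x = v)
    (hright : ∀ u v : Q, ∃! y, mul y u = v)
    (N : ℕ) (hN : 1 ≤ N) (A A' : Fin N → Q)
    (h : rC mul A N = rC mul A' N) :
    ∀ j ≤ N, ∀ i : Fin N, j ≤ (i : ℕ) → rC mul A (N - j) i = rC mul A' (N - j) i := by
  intro j
  induction j with
  | zero =>
    intro _ i _
    simp only [Nat.sub_zero, h]
  | succ j ih =>
    intro hj i hi
    have hjN : j ≤ N := by omega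
    have hm : N - (j+1) < N := by omega
    have hNj : N - j = (N - (j+1)) + 1 := by omega
    set m := N - (j+1) with hmdef
    have hi1 : (i : ℕ) - 1 < N := by omega
    have key : ∀ B : Fin N → Q,
        rC mul B (m+1) i = mul (rC mul B (m+1) ⟨(i:ℕ)-1, hi1⟩) (rC mul B m i) := by
      intro B
      rw [rC_succ' mul B m hm]
      exact eTr_succ' mul _ _ i ((i:ℕ)-1) (by omega) (by omega)
    have hA : rC mul A (m+1) i = rC mul A' (m+1) i := by
      have := ih hjN i (by omega); rwa [hNj] at this
    have hA1 : rC mul A (m+1) ⟨(i:ℕ)-1, hi1⟩ = rC mul A' (m+1) ⟨(i:ℕ)-1, hi1⟩ := by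
      have := ih hjN ⟨(i:ℕ)-1, hi1⟩ (by simp; omega); rwa [hNj] at this
    obtain ⟨x, hx, hux⟩ := hleft (rC mul A' (m+1) ⟨(i:ℕ)-1, hi1⟩) (rC mul A' (m+1) i)
    have h1 : rC mul A m i = x := hux _ (by rw [← hA1, ← hA]; exact (key A).symm)
    have h2 : rC mul A' m i = x := hux _ (key A').symm
    exact h1.trans h2.symm
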